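/- Fix ν ∈ [0,1), α > 0, ρ ∈ (0,1) and J ∈ ℤ_{>0}. Then there exist constants c > 0 and ε₀ ∈ (0,1] such that for every ε ∈ (0,ε₀], every j ∈ {0,1,…,J−1}, and every r ∈ [−π,π], the tilted step distribution f with parameters (q, ᾱ, ν, ρ), where q = e^{−ε} and ᾱ = α e^{−εj}, satisfies |Σ_{n∈ℕ} f(n) e^{i r n}| ≤ 1 − ε r²/c. -/

import Mathlib

/-!
Since `λ` is exactly the reciprocal of the generating function `∑ ρⁿ p(n)`, the tilted step
distribution `f` is a probability distribution on `ℕ`. For such an `f`, the triangle inequality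
applied to all atoms except `0` and `1`, whose joint contribution is computed exactly, gives
`|∑ f(n) e^{irn}| ≤ 1 - f(0) f(1) (1 - cos r)`, and `1 - cos r ≥ 2r²/π²` on `[-π, π]`.
Finally `f(0) ≥ p(0) ≥ q ≥ e⁻¹` and `f(1) ≥ ρ p(1)`, which is of order `ε` because
`1 - q ≥ ε e⁻¹` and `ᾱ` stays in `[α e^{-J}, α]`.
-/

/-- The step distribution with parameters `(q, ᾱ, ν)`:
`p(0) = 1 − ᾱ(1−q)/(1+ᾱ)` and
`p(n) = (ᾱ(1−q)(1−ν)/(1+ᾱ)²)·((ν+ᾱ)/(1+ᾱ))^{n−1}` for `n ≥ 1`. -/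
noncomputable def stepDist (q a ν : ℝ) : ℕ → ℝ := fun n =>
  if n = 0 then 1 - a * (1 - q) / (1 + a)
  else (a * (1 - q) * (1 - ν) / (1 + a) ^ 2) * ((ν + a) / (1 + a)) ^ (n - 1)

/-- The tilted step distribution with parameters `(q, ᾱ, ν, ρ)`:
`f(n) = λ ρ^n p(n)` where `γ = (1−ρ)/(1−νρ)` and `λ = (1+ᾱγ)/(1+qᾱγ)`. -/
noncomputable def tiltedStepDist (q a ν ρ : ℝ) : ℕ → ℝ := fun n =>
  ((1 + a * ((1 - ρ) / (1 - ν * ρ))) / (1 + q * a * ((1 - ρ) / (1 - ν * ρ)))) *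
    ρ ^ n * stepDist q a ν n

open Real Complex

section StepDist

variable {q a ν ρ : ℝ}

lemma stepDist_zero : stepDist q a ν 0 = 1 - a * (1 - q) / (1 + a) := rfl

lemma stepDist_succ (n : ℕ) :
    stepDist q a ν (n + 1) =
      a * (1 - q) * (1 - ν) / (1 + a) ^ 2 * ((ν + a) / (1 + a)) ^ n := rfl

lemma stepDist_nonneg (hq0 : 0 ≤ q) (hq1 : q ≤ 1) (ha : 0 ≤ a) (hν0 : 0 ≤ ν) (hν1 : ν < 1)
    (n : ℕ) : 0 ≤ stepDist q a ν n := by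
  cases n with
  | zero =>
    rw [stepDist_zero, sub_nonneg, div_le_one (by positivity)]
    nlinarith
  | succ n =>
    rw [stepDist_succ]
    have : 0 ≤ 1 - q := by linarith
    have : 0 ≤ 1 - ν := by linarith
    positivity

lemma le_stepDist_zero (hq1 : q ≤ 1) (ha : 0 ≤ a) : q ≤ stepDist q a ν 0 := by
  rw [stepDist_zero, le_sub_comm, div_le_iff₀ (by positivity)]
  nlinarith

lemma hasSum_pow_mul_stepDist (ha : 0 ≤ a) (hν0 : 0 ≤ ν) (hν1 : ν < 1) (hρ0 : 0 ≤ ρ)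
    (hρ1 : ρ < 1) :
    HasSum (fun n ↦ ρ ^ n * stepDist q a ν n)
      ((1 + q * a * ((1 - ρ) / (1 - ν * ρ))) / (1 + a * ((1 - ρ) / (1 - ν * ρ)))) := by
  have hβ : (ν + a) / (1 + a) < 1 := by rw [div_lt_one (by positivity)]; linarith
  have hρβ : ρ * ((ν + a) / (1 + a)) < 1 := mul_lt_one_of_nonneg_of_lt_one_left hρ0 hρ1 hβ.le
  have hgeom := (hasSum_geometric_of_lt_one (by positivity) hρβ).mul_left
    (ρ * (a * (1 - q) * (1 - ν) / (1 + a) ^ 2))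
  have htail : HasSum (fun n ↦ ρ ^ (n + 1) * stepDist q a ν (n + 1))
      (ρ * (a * (1 - q) * (1 - ν) / (1 + a) ^ 2) * (1 - ρ * ((ν + a) / (1 + a)))⁻¹) :=
    hgeom.congr_fun fun n ↦ by rw [stepDist_succ, mul_pow, pow_succ]; ring
  convert htail.zero_add (f := fun n ↦ ρ ^ n * stepDist q a ν n) using 1
  have h1 : 0 < 1 - ν * ρ := by nlinarith
  have h2 : 0 < 1 + a - ρ * (ν + a) := by nlinarith
  have hγ : 0 ≤ (1 - ρ) / (1 - ν * ρ) := div_nonneg (by linarith) h1.le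
  set γ := (1 - ρ) / (1 - ν * ρ)
  have hγ' : γ * (1 - ν * ρ) = 1 - ρ := div_mul_cancel₀ _ h1.ne'
  have h3 : 0 < 1 + a * γ := by positivity
  rw [pow_zero, one_mul, stepDist_zero,
    show 1 - ρ * ((ν + a) / (1 + a)) = (1 + a - ρ * (ν + a)) / (1 + a) by field_simp]
  field_simp
  linear_combination (-a * (1 - q) * (1 + a)) * hγ'

lemma hasSum_tiltedStepDist (hq0 : 0 ≤ q) (ha : 0 ≤ a) (hν0 : 0 ≤ ν) (hν1 : ν < 1)
    (hρ0 : 0 ≤ ρ) (hρ1 : ρ < 1) : HasSum (tiltedStepDist q a ν ρ) 1 := by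
  have hγ : 0 ≤ (1 - ρ) / (1 - ν * ρ) := div_nonneg (by linarith) (by nlinarith)
  have h := (hasSum_pow_mul_stepDist (q := q) ha hν0 hν1 hρ0 hρ1).mul_left
    ((1 + a * ((1 - ρ) / (1 - ν * ρ))) / (1 + q * a * ((1 - ρ) / (1 - ν * ρ))))
  rw [div_mul_div_cancel₀', div_self (by positivity)] at h
  · simp only [← mul_assoc] at h
    exact h
  · positivity

lemma pow_mul_stepDist_le_tiltedStepDist (hq0 : 0 ≤ q) (hq1 : q ≤ 1) (ha : 0 ≤ a)
    (hν0 : 0 ≤ ν) (hν1 : ν < 1) (hρ0 : 0 ≤ ρ) (hρ1 : ρ < 1) (n : ℕ) :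
    ρ ^ n * stepDist q a ν n ≤ tiltedStepDist q a ν ρ n := by
  have hγ : 0 ≤ (1 - ρ) / (1 - ν * ρ) := div_nonneg (by linarith) (by nlinarith)
  have hnorm : 1 ≤ (1 + a * ((1 - ρ) / (1 - ν * ρ))) / (1 + q * a * ((1 - ρ) / (1 - ν * ρ))) := by
    rw [one_le_div (by positivity)]
    nlinarith [mul_nonneg ha hγ]
  have hp := stepDist_nonneg hq0 hq1 ha hν0 hν1 n
  rw [tiltedStepDist, mul_assoc]
  exact le_mul_of_one_le_left (by positivity) hnorm

lemma tiltedStepDist_nonneg (hq0 : 0 ≤ q) (hq1 : q ≤ 1) (ha : 0 ≤ a) (hν0 : 0 ≤ ν)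
    (hν1 : ν < 1) (hρ0 : 0 ≤ ρ) (hρ1 : ρ < 1) (n : ℕ) : 0 ≤ tiltedStepDist q a ν ρ n :=
  (mul_nonneg (pow_nonneg hρ0 n) (stepDist_nonneg hq0 hq1 ha hν0 hν1 n)).trans
    (pow_mul_stepDist_le_tiltedStepDist hq0 hq1 ha hν0 hν1 hρ0 hρ1 n)

lemma le_tiltedStepDist_zero_mul_one (hq0 : 0 ≤ q) (hq1 : q ≤ 1) (ha : 0 ≤ a) (hν0 : 0 ≤ ν)
    (hν1 : ν < 1) (hρ0 : 0 ≤ ρ) (hρ1 : ρ < 1) :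
    q * (ρ * (a * (1 - q) * (1 - ν) / (1 + a) ^ 2)) ≤
      tiltedStepDist q a ν ρ 0 * tiltedStepDist q a ν ρ 1 := by
  have h0 := pow_mul_stepDist_le_tiltedStepDist hq0 hq1 ha hν0 hν1 hρ0 hρ1 0
  have h1 := pow_mul_stepDist_le_tiltedStepDist hq0 hq1 ha hν0 hν1 hρ0 hρ1 1
  have hp1 := mul_nonneg hρ0 (stepDist_nonneg hq0 hq1 ha hν0 hν1 1)
  rw [pow_zero, one_mul] at h0
  rw [pow_one] at h1
  rw [stepDist_succ, pow_zero, mul_one] at h1 hp1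
  exact mul_le_mul ((le_stepDist_zero hq1 ha).trans h0) h1 hp1
    (tiltedStepDist_nonneg hq0 hq1 ha hν0 hν1 hρ0 hρ1 0)

end StepDist

lemma norm_add_mul_exp_I_le {x y : ℝ} (hx : 0 ≤ x) (hy : 0 ≤ y) (hxy : x + y ≤ 1) (r : ℝ) :
    ‖(x : ℂ) + y * exp (I * r)‖ ≤ x + y - x * y * (1 - Real.cos r) := by
  have hz : (x : ℂ) + y * exp (I * r) =
      ((x + y * Real.cos r : ℝ) : ℂ) + ((y * Real.sin r : ℝ) : ℂ) * I := by
    rw [mul_comm I, exp_mul_I]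
    push_cast
    ring
  have hxy' : 0 ≤ x * y := mul_nonneg hx hy
  have hx' : 0 ≤ 1 - x - y := by linarith
  have hc1 : 0 ≤ 1 - Real.cos r := by linarith [Real.cos_le_one r]
  have hc2 : 0 ≤ 1 + Real.cos r := by linarith [Real.neg_one_le_cos r]
  have hbound : 0 ≤ x + y - x * y * (1 - Real.cos r) := by
    nlinarith [mul_nonneg hx (by linarith : 0 ≤ 1 - y), mul_nonneg hy (by linarith : 0 ≤ 1 - x),
      mul_nonneg hxy' hc2]
  rw [hz, norm_add_mul_I, Real.sqrt_le_left hbound, mul_pow, Real.sin_sq]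
  nlinarith [mul_nonneg (mul_nonneg hxy' hc1) hx', sq_nonneg (x * y * (1 - Real.cos r))]

lemma norm_tsum_mul_exp_I_le {f : ℕ → ℝ} (hf : ∀ n, 0 ≤ f n) (hsum : HasSum f 1) (r : ℝ) :
    ‖∑' n : ℕ, (f n : ℂ) * exp (I * r * n)‖ ≤ 1 - f 0 * f 1 * (1 - Real.cos r) := by
  have hnorm (n : ℕ) : ‖(f n : ℂ) * exp (I * r * n)‖ = f n := by
    rw [norm_mul, norm_real, Real.norm_of_nonneg (hf n),
      show I * r * n = ((r * n : ℝ) : ℂ) * I by push_cast; ring, norm_exp_ofReal_mul_I, mul_one]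
  have hsummable : Summable fun n : ℕ ↦ (f n : ℂ) * exp (I * r * n) :=
    .of_norm (by simpa only [hnorm] using hsum.summable)
  have htail_sum : HasSum (fun n ↦ f (n + 2)) (1 - f 0 - f 1) := by
    have h := (hasSum_nat_add_iff' 2).2 hsum
    rw [Finset.sum_range_succ, Finset.sum_range_one, ← sub_sub] at h
    exact h
  have htail : ‖∑' n : ℕ, (f (n + 2) : ℂ) * exp (I * r * ↑(n + 2))‖ ≤ 1 - f 0 - f 1 :=
    tsum_of_norm_bounded htail_sum fun n ↦ (hnorm _).le
  have hf01 : f 0 + f 1 ≤ 1 := by linarith [htail_sum.nonneg fun n ↦ hf (n + 2)]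
  rw [← hsummable.sum_add_tsum_nat_add 2]
  simp only [Finset.sum_range_succ, Finset.sum_range_zero, zero_add, Nat.cast_zero, mul_zero,
    Complex.exp_zero, mul_one, Nat.cast_one]
  calc _ ≤ ‖(f 0 : ℂ) + f 1 * exp (I * r)‖ + (1 - f 0 - f 1) := (norm_add_le _ _).trans (by gcongr)
    _ ≤ (f 0 + f 1 - f 0 * f 1 * (1 - Real.cos r)) + (1 - f 0 - f 1) := by
      gcongr
      exact norm_add_mul_exp_I_le (hf 0) (hf 1) hf01 r
    _ = 1 - f 0 * f 1 * (1 - Real.cos r) := by ring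

lemma mul_exp_neg_le_one_sub_exp_neg (x : ℝ) : x * Real.exp (-x) ≤ 1 - Real.exp (-x) := by
  have h := mul_le_mul_of_nonneg_right (Real.add_one_le_exp x) (Real.exp_nonneg (-x))
  rw [add_mul, one_mul, ← Real.exp_add, add_neg_cancel, Real.exp_zero] at h
  linarith

lemma eps_mul_le_tiltedStepDist_zero_mul_one {ν α ρ ε t T : ℝ} (hν0 : 0 ≤ ν) (hν1 : ν < 1)
    (hα : 0 < α) (hρ0 : 0 < ρ) (hρ1 : ρ < 1) (hε0 : 0 < ε) (hε1 : ε ≤ 1) (ht0 : 0 ≤ t)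
    (htT : t ≤ T) :
    ε * (Real.exp (-1) * (ρ * (α * Real.exp (-T) * Real.exp (-1) * (1 - ν) / (1 + α) ^ 2))) ≤
      tiltedStepDist (Real.exp (-ε)) (α * Real.exp (-ε * t)) ν ρ 0 *
        tiltedStepDist (Real.exp (-ε)) (α * Real.exp (-ε * t)) ν ρ 1 := by
  set q := Real.exp (-ε)
  set a := α * Real.exp (-ε * t)
  have hq : Real.exp (-1) ≤ q := Real.exp_le_exp.2 (by linarith)
  have hq1 : q ≤ 1 := Real.exp_le_one_iff.2 (by linarith)
  have h1q : ε * Real.exp (-1) ≤ 1 - q :=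
    (mul_le_mul_of_nonneg_left hq hε0.le).trans (mul_exp_neg_le_one_sub_exp_neg ε)
  have haT : α * Real.exp (-T) ≤ a :=
    mul_le_mul_of_nonneg_left (Real.exp_le_exp.2 (by nlinarith)) hα.le
  have haα : a ≤ α := mul_le_of_le_one_right hα.le (Real.exp_le_one_iff.2 (by nlinarith))
  calc _ = Real.exp (-1) *
        (ρ * (α * Real.exp (-T) * (ε * Real.exp (-1)) * (1 - ν) / (1 + α) ^ 2)) := by ring
    _ ≤ q * (ρ * (a * (1 - q) * (1 - ν) / (1 + a) ^ 2)) := by gcongr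
    _ ≤ _ := le_tiltedStepDist_zero_mul_one (Real.exp_nonneg _) hq1 (by positivity) hν0 hν1
      hρ0.le hρ1

theorem tiltedStepDist_charFun_decay_general (ν α ρ : ℝ) (J : ℕ)
    (hν0 : 0 ≤ ν) (hν1 : ν < 1) (hα : 0 < α) (hρ0 : 0 < ρ) (hρ1 : ρ < 1) :
    ∃ c : ℝ, 0 < c ∧ ∃ ε₀ : ℝ, ε₀ ∈ Set.Ioc (0 : ℝ) 1 ∧
      ∀ ε ∈ Set.Ioc (0 : ℝ) ε₀, ∀ j < J, ∀ r ∈ Set.Icc (-Real.pi) Real.pi,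
        ‖(∑' n : ℕ,
            (tiltedStepDist (Real.exp (-ε)) (α * Real.exp (-ε * j)) ν ρ n : ℂ) *
              Complex.exp (Complex.I * r * n))‖ ≤ 1 - ε * r ^ 2 / c := by
  set K := Real.exp (-1) * (ρ * (α * Real.exp (-J) * Real.exp (-1) * (1 - ν) / (1 + α) ^ 2))
  have hK : 0 < K := by positivity
  refine ⟨π ^ 2 / (2 * K), by positivity, 1, ⟨one_pos, le_rfl⟩, ?_⟩
  rintro ε ⟨hε0, hε1⟩ j hj r hr
  have hf01 := eps_mul_le_tiltedStepDist_zero_mul_one hν0 hν1 hα hρ0 hρ1 hε0 hε1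
    (Nat.cast_nonneg j) (show (j : ℝ) ≤ J by exact_mod_cast hj.le)
  have hq0 : 0 ≤ Real.exp (-ε) := Real.exp_nonneg _
  have hq1 : Real.exp (-ε) ≤ 1 := Real.exp_le_one_iff.2 (by linarith)
  have ha : 0 ≤ α * Real.exp (-ε * j) := by positivity
  have hcos : 2 / π ^ 2 * r ^ 2 ≤ 1 - Real.cos r := by
    linarith [Real.cos_le_one_sub_mul_cos_sq (abs_le.2 hr)]
  calc _ ≤ 1 - tiltedStepDist _ _ ν ρ 0 * tiltedStepDist _ _ ν ρ 1 * (1 - Real.cos r) :=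
        norm_tsum_mul_exp_I_le (tiltedStepDist_nonneg hq0 hq1 ha hν0 hν1 hρ0.le hρ1)
          (hasSum_tiltedStepDist hq0 ha hν0 hν1 hρ0.le hρ1) r
    _ ≤ 1 - ε * K * (2 / π ^ 2 * r ^ 2) := by
      gcongr 1 - ?_
      exact mul_le_mul hf01 hcos (by positivity) (hf01.trans' (by positivity))
    _ = 1 - ε * r ^ 2 / (π ^ 2 / (2 * K)) := by field_simp

/-- For fixed `ν ∈ [0,1)`, `α > 0`, `ρ ∈ (0,1)`, `J ∈ ℤ_{>0}`, there are
`c > 0` and `ε₀ ∈ (0,1]` such that for all `ε ∈ (0,ε₀]`, `j ∈ {0,…,J−1}` and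
`r ∈ [−π,π]`, the tilted step distribution with `q = e^{−ε}`, `ᾱ = α e^{−εj}` satisfies
`|∑ f(n) e^{irn}| ≤ 1 − ε r²/c`. -/
theorem tiltedStepDist_charFun_decay (ν α ρ : ℝ) (J : ℕ)
    (hν0 : 0 ≤ ν) (hν1 : ν < 1) (hα : 0 < α) (hρ0 : 0 < ρ) (hρ1 : ρ < 1) (hJ : 0 < J) :
    ∃ c : ℝ, 0 < c ∧ ∃ ε₀ : ℝ, ε₀ ∈ Set.Ioc (0 : ℝ) 1 ∧
      ∀ ε ∈ Set.Ioc (0 : ℝ) ε₀, ∀ j < J, ∀ r ∈ Set.Icc (-Real.pi) Real.pi,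
        ‖(∑' n : ℕ,
            (tiltedStepDist (Real.exp (-ε)) (α * Real.exp (-ε * j)) ν ρ n : ℂ) *
              Complex.exp (Complex.I * r * n))‖ ≤ 1 - ε * r ^ 2 / c :=
  tiltedStepDist_charFun_decay_general ν α ρ J hν0 hν1 hα hρ0 hρ1
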